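/- Let κ be an uncountable cardinal carrying a normal κ-complete nonprincipal ultrafilter U, let A ⊆ ℕ^ℕ, and let t ↦ <_t be an order representation of A. Consider the auxiliary game in which player I, at his i-th move, plays a pair (n_{2i}, ξ_i) ∈ ℕ × κ, player II plays n_{2i+1} ∈ ℕ, and player I wins the resulting play iff x := (n_k)_k ∈ A and for every k and all i, j < k/2: i <_{x↾k} j if and only if ξ_i < ξ_j. If player II has a winning strategy in this auxiliary game, then player II has a winning strategy in the Gale–Stewart game on ℕ with payoff A. -/

import Mathlib

universe u

/-- The finite sequence of the first `n` terms of `x`, i.e. `x ↾ n`. -/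
def hist {X : Type*} (x : ℕ → X) (n : ℕ) : List X := List.ofFn (fun i : Fin n => x i)

/-- A play `x` is consistent with a strategy `τ` for player II in the Gale–Stewart game
on ℕ if `x (2k+1) = τ (x ↾ (2k+1))` for all `k`. -/
def ConsistentII (τ : List ℕ → ℕ) (x : ℕ → ℕ) : Prop :=
  ∀ k, x (2 * k + 1) = τ (hist x (2 * k + 1))

/-- A strategy `τ` is winning for player II in the Gale–Stewart game on ℕ with payoff
`A` if every play consistent with it lies outside `A`. -/
def WinningII (A : Set (ℕ → ℕ)) (τ : List ℕ → ℕ) : Prop :=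
  ∀ x : ℕ → ℕ, ConsistentII τ x → x ∉ A

/-- `R` is an order representation of `A ⊆ ℕ^ℕ`: to each finite sequence `t` of naturals
it assigns a strict linear order `R t` on `{0, 1, …, |t|}`, monotone under initial
segments, such that `x ∈ A` iff the union order `<_x := ⋃ₙ R (x ↾ n)` is wellfounded
(has no infinite strictly descending sequence). -/
structure OrderRep (A : Set (ℕ → ℕ)) (R : List ℕ → ℕ → ℕ → Prop) : Prop where
  dom : ∀ t : List ℕ, ∀ i j, R t i j → i ≤ t.length ∧ j ≤ t.length
  irrefl : ∀ t : List ℕ, ∀ i, ¬ R t i i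
  trans : ∀ t : List ℕ, ∀ i j k, R t i j → R t j k → R t i k
  total : ∀ t : List ℕ, ∀ i j, i ≤ t.length → j ≤ t.length → i ≠ j → R t i j ∨ R t j i
  mono : ∀ t s : List ℕ, t <+: s → ∀ i j, R t i j → R s i j
  mem_iff : ∀ x : ℕ → ℕ,
    (x ∈ A ↔ ¬ ∃ f : ℕ → ℕ, ∀ n : ℕ, ∃ m : ℕ, R (hist x m) (f (n + 1)) (f n))

/-- Player I wins the play `(x, ξ)` of the auxiliary game iff `x ∈ A` and for every `k`
and all `i, j < k / 2`: `i <_{x ↾ k} j` iff `ξ_i < ξ_j`. -/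
def AuxPayoff (A : Set (ℕ → ℕ)) (R : List ℕ → ℕ → ℕ → Prop) {O : Type*} [LT O]
    (x : ℕ → ℕ) (ξ : ℕ → O) : Prop :=
  x ∈ A ∧ ∀ k i j, i < k / 2 → j < k / 2 → (R (hist x k) i j ↔ ξ i < ξ j)

/-- A strategy for player II in the auxiliary game assigns to each position (the
sequences of natural-number moves and ordinal moves made so far) a natural number
`n_{2i+1}`; it is winning if no play consistent with it satisfies the auxiliary
payoff. -/
def AuxWinningII (A : Set (ℕ → ℕ)) (R : List ℕ → ℕ → ℕ → Prop) {O : Type*} [LT O]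
    (τ : List ℕ × List O → ℕ) : Prop :=
  ∀ (x : ℕ → ℕ) (ξ : ℕ → O),
    (∀ i, x (2 * i + 1) = τ (hist x (2 * i + 1), hist ξ (i + 1))) → ¬ AuxPayoff A R x ξ

/-- An ultrafilter `U` on `κ` is `κ`-complete if it is closed under intersections of
families of fewer than `κ` of its members. -/
def KappaComplete {O : Type u} (U : Ultrafilter O) : Prop :=
  ∀ S : Set (Set O), Cardinal.mk S < Cardinal.mk O → (∀ t ∈ S, t ∈ U) → ⋂₀ S ∈ U

/-- An ultrafilter is nonprincipal if it contains no singleton. -/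
def Nonprincipal {O : Type u} (U : Ultrafilter O) : Prop :=
  ∀ a : O, {a} ∉ U

/-- An ultrafilter `U` on a well-ordered set `κ` is normal if it is closed under
diagonal intersections. -/
def NormalUF {O : Type u} [LT O] (U : Ultrafilter O) : Prop :=
  ∀ f : O → Set O, (∀ a, f a ∈ U) → {a : O | ∀ b, b < a → a ∈ f b} ∈ U

/-!
Rowbottom's theorem for the normal ultrafilter `U` yields `H ∈ U` on which, for every position
`t`, the answer of `τ` to `t` together with ordinals `ξ_0, …, ξ_{|t|/2}` from `H` depends only
on how these ordinals are ordered. Player II answers `t` by feeding `τ` any ordinals of `H`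
ordered like `<_t`. If a play `x` against this strategy lay in `A`, then `<_x` would be a
countable well-order, hence would embed into the uncountable well-order `H`; the embedding `ξ`
makes `(x, ξ)` a play consistent with `τ` that player I wins, which is impossible.
-/

open Set Function Filter

section Ultrafilter
variable {O : Type u} [Uncountable O] {U : Ultrafilter O}

theorem KappaComplete.countableInterFilter (hc : KappaComplete U) :
    CountableInterFilter (U : Filter O) where
  countable_sInter_mem S hS :=
    hc S ((Cardinal.mk_le_aleph0_iff.2 hS.to_subtype).trans_lt Cardinal.aleph0_lt_mk)

theorem KappaComplete.not_countable_of_mem (hc : KappaComplete U) (hnp : Nonprincipal U)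
    {H : Set O} (hH : H ∈ U) : ¬ H.Countable := by
  have := hc.countableInterFilter
  intro hHc
  have hcompl : Hᶜ ∈ U := by
    have hsingle : ∀ a ∈ H, {a}ᶜ ∈ U := fun a _ => Ultrafilter.compl_mem_iff_notMem.2 (hnp a)
    have hinter : (⋂ a ∈ H, ({a}ᶜ : Set O)) = Hᶜ := by ext; aesop
    exact hinter ▸ (countable_bInter_mem hHc).2 hsingle
  exact Ultrafilter.compl_mem_iff_notMem.1 hcompl hH

theorem KappaComplete.exists_preimage_singleton_mem (hc : KappaComplete U) {β : Type*}
    [Countable β] (c : O → β) : ∃ b, c ⁻¹' {b} ∈ U := by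
  have := hc.countableInterFilter
  by_contra! h
  have hempty : (⋂ b, (c ⁻¹' {b})ᶜ) ∈ U :=
    countable_iInter_mem.2 fun b => Ultrafilter.compl_mem_iff_notMem.2 (h b)
  have : (⋂ b, (c ⁻¹' {b})ᶜ) = ∅ := by ext; simp
  exact U.empty_notMem (this ▸ hempty)

end Ultrafilter

section Rowbottom
variable {O : Type u} [LinearOrder O] {β : Type*}

def IsHomogeneous {n : ℕ} (F : (Fin n → O) → β) (H : Set O) : Prop :=
  ∀ s s' : Fin n → O, StrictMono s → StrictMono s' → range s ⊆ H → range s' ⊆ H → F s = F s'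

theorem Set.Infinite.exists_strictMono_range_subset {H : Set O} (hH : H.Infinite) (n : ℕ) :
    ∃ s : Fin n → O, StrictMono s ∧ range s ⊆ H := by
  obtain ⟨t, htH, rfl⟩ := hH.exists_subset_card_eq n
  exact ⟨t.orderEmbOfFin rfl, (t.orderEmbOfFin rfl).strictMono,
    (t.range_orderEmbOfFin rfl).trans_subset htH⟩

def IsOrderHomogeneous {n : ℕ} (F : (Fin n → O) → β) (H : Set O) : Prop :=
  ∀ s s' : Fin n → O, Injective s → range s ⊆ H → range s' ⊆ H →
    (∀ a b, s a < s b ↔ s' a < s' b) → F s = F s'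

theorem IsOrderHomogeneous.mono {n : ℕ} {F : (Fin n → O) → β} {H H' : Set O}
    (hF : IsOrderHomogeneous F H) (hH' : H' ⊆ H) : IsOrderHomogeneous F H' :=
  fun s s' hs hsH hs'H hss' => hF s s' hs (hsH.trans hH') (hs'H.trans hH') hss'

variable [Uncountable O] {U : Ultrafilter O} [Countable β]

theorem exists_mem_isHomogeneous (hc : KappaComplete U) (hnp : Nonprincipal U)
    (hnorm : NormalUF U) {n : ℕ} (F : (Fin n → O) → β) : ∃ H ∈ U, IsHomogeneous F H := by
  induction n with
  | zero => exact ⟨univ, univ_mem, fun s s' _ _ _ _ => congrArg F (Subsingleton.elim s s')⟩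
  | succ n ih =>
    choose Ha hHaU hHa using fun a => ih (fun s => F (Fin.cons a s))
    have hinf : ∀ a, (Ha a).Infinite := fun a hfin =>
      hc.not_countable_of_mem hnp (hHaU a) hfin.countable
    choose tail htail htailH using fun a => (hinf a).exists_strictMono_range_subset n
    obtain ⟨b, hb⟩ := hc.exists_preimage_singleton_mem fun a => F (Fin.cons a (tail a))
    refine ⟨{a | ∀ a' < a, a ∈ Ha a'} ∩ _, inter_mem (hnorm Ha hHaU) hb, ?_⟩
    suffices h : ∀ s, StrictMono s → range s ⊆ {a | ∀ a' < a, a ∈ Ha a'} ∩ _ → F s = b from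
      fun s s' hs hs' hsH hs'H => (h s hs hsH).trans (h s' hs' hs'H).symm
    intro s hs hsH
    have htail_mem : range (Fin.tail s) ⊆ Ha (s 0) := by
      rintro _ ⟨k, rfl⟩
      exact (hsH (mem_range_self k.succ)).1 _ (hs k.succ_pos)
    calc F s = F (Fin.cons (s 0) (Fin.tail s)) := by rw [Fin.cons_self_tail]
      _ = F (Fin.cons (s 0) (tail (s 0))) :=
        hHa (s 0) _ _ (hs.comp Fin.strictMono_succ) (htail _) htail_mem (htailH _)
      _ = b := (hsH (mem_range_self 0)).2

theorem exists_mem_isOrderHomogeneous (hc : KappaComplete U) (hnp : Nonprincipal U)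
    (hnorm : NormalUF U) {n : ℕ} (F : (Fin n → O) → β) : ∃ H ∈ U, IsOrderHomogeneous F H := by
  choose Hσ hHσU hHσ using fun σ : Equiv.Perm (Fin n) =>
    exists_mem_isHomogeneous hc hnp hnorm fun s => F (s ∘ σ.symm)
  refine ⟨⋂ σ, Hσ σ, iInter_mem.2 hHσU, fun s s' hs hsH hs'H hss' => ?_⟩
  set σ := Tuple.sort s
  have hsσ : StrictMono (s ∘ σ) :=
    (Tuple.monotone_sort s).strictMono_of_injective (hs.comp σ.injective)
  have hs'σ : StrictMono (s' ∘ σ) := fun a b hab => (hss' _ _).1 (hsσ hab)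
  have hσ_sub {t : Fin n → O} (ht : range t ⊆ ⋂ σ, Hσ σ) : range (t ∘ σ) ⊆ Hσ σ :=
    (range_comp_subset_range _ _).trans (ht.trans (iInter_subset _ σ))
  simpa [comp_assoc] using hHσ σ _ _ hsσ hs'σ (hσ_sub hsH) (hσ_sub hs'H)

theorem exists_mem_forall_isOrderHomogeneous (hc : KappaComplete U) (hnp : Nonprincipal U)
    (hnorm : NormalUF U) {ι : Type*} [Countable ι] {n : ι → ℕ} (F : ∀ i, (Fin (n i) → O) → β) :
    ∃ H ∈ U, ∀ i, IsOrderHomogeneous (F i) H := by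
  have := hc.countableInterFilter
  choose H hHU hH using fun i => exists_mem_isOrderHomogeneous hc hnp hnorm (F i)
  exact ⟨⋂ i, H i, countable_iInter_mem.2 hHU, fun i => (hH i).mono (iInter_subset H i)⟩

end Rowbottom

theorem exists_relEmbedding_of_not_countable {O : Type u} [LinearOrder O] [WellFoundedLT O]
    {α : Type} [Countable α] (r : α → α → Prop) [IsWellOrder α r] {H : Set O}
    (hH : ¬ H.Countable) : Nonempty (r ↪r ((· < ·) : H → H → Prop)) := by
  refine ⟨((Ordinal.lift_type_le.{0, u, u}).1 ?_).some.toRelEmbedding⟩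
  rw [Ordinal.lift_id]
  apply le_of_lt
  have hc : (Ordinal.lift.{u} (Ordinal.type r)).card < Cardinal.mk ↥H := by
    rw [← Ordinal.lift_card, Ordinal.card_type]
    exact (Cardinal.lift_le_aleph0.2 Cardinal.mk_le_aleph0).trans_lt
      (not_le.1 (mt Cardinal.le_aleph0_iff_set_countable.1 hH))
  exact (Cardinal.lt_ord.2 hc).trans_le (Cardinal.ord_le.2 (Ordinal.card_type _).ge)

theorem hist_length {X : Type*} (x : ℕ → X) (n : ℕ) : (hist x n).length = n :=
  List.length_ofFn

theorem hist_prefix {X : Type*} (x : ℕ → X) {m n : ℕ} (h : m ≤ n) : hist x m <+: hist x n :=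
  List.prefix_iff_eq_take.2 (List.ext_getElem (by simp [hist, h]) (by simp [hist]))

def unionOrder (R : List ℕ → ℕ → ℕ → Prop) (x : ℕ → ℕ) (i j : ℕ) : Prop :=
  ∃ m, R (hist x m) i j

namespace OrderRep
variable {A : Set (ℕ → ℕ)} {R : List ℕ → ℕ → ℕ → Prop} (hR : OrderRep A R) {x : ℕ → ℕ}
include hR

theorem rel_hist_mono {m m' i j : ℕ} (h : m ≤ m') (hij : R (hist x m) i j) :
    R (hist x m') i j :=
  hR.mono _ _ (hist_prefix x h) i j hij

theorem rel_hist_iff_unionOrder {m i j : ℕ} (hi : i ≤ m) (hj : j ≤ m) :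
    R (hist x m) i j ↔ unionOrder R x i j := by
  refine ⟨fun h => ⟨m, h⟩, fun ⟨m₀, h₀⟩ => ?_⟩
  have hne : i ≠ j := by rintro rfl; exact hR.irrefl _ _ h₀
  refine (hR.total _ i j (by rwa [hist_length]) (by rwa [hist_length]) hne).resolve_right
    fun h => hR.irrefl _ i (hR.trans _ i j i (hR.rel_hist_mono (le_max_right m m₀) h₀)
      (hR.rel_hist_mono (le_max_left m m₀) h))

theorem isWellOrder_unionOrder (hx : x ∈ A) : IsWellOrder ℕ (unionOrder R x) where
  trichotomous i j hij hji := by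
    by_contra hne
    rcases hR.total (hist x (max i j)) i j (by simp [hist_length]) (by simp [hist_length]) hne
      with h | h
    exacts [hij ⟨_, h⟩, hji ⟨_, h⟩]
  wf := wellFounded_iff_isEmpty_descending_chain.2 ⟨fun ⟨f, hf⟩ => (hR.mem_iff x).1 hx ⟨f, hf⟩⟩

end OrderRep

section InducedStrategy
variable {O : Type u} [LinearOrder O]

def RealizesOrder {n : ℕ} (r : ℕ → ℕ → Prop) (H : Set O) (s : Fin n → O) : Prop :=
  Injective s ∧ range s ⊆ H ∧ ∀ a b : Fin n, r a b ↔ s a < s b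

/-- II answers `t` as `τ` would after I's ordinals were any ones from `H` ordered like `<_t` on
`{0, …, |t| / 2}`; on an order-homogeneous `H` the choice of ordinals does not matter. -/
noncomputable def inducedStrategy (R : List ℕ → ℕ → ℕ → Prop) (H : Set O)
    (τ : List ℕ × List O → ℕ) (t : List ℕ) : ℕ :=
  open Classical in
  if h : ∃ s : Fin (t.length / 2 + 1) → O, RealizesOrder (R t) H s then
    τ (t, List.ofFn h.choose) else 0

theorem inducedStrategy_eq {R : List ℕ → ℕ → ℕ → Prop} {H : Set O} {τ : List ℕ × List O → ℕ}
    (hH : ∀ t : List ℕ,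
      IsOrderHomogeneous (n := t.length / 2 + 1) (fun s => τ (t, List.ofFn s)) H)
    {t : List ℕ} {s : Fin (t.length / 2 + 1) → O} (hs : RealizesOrder (R t) H s) :
    inducedStrategy R H τ t = τ (t, List.ofFn s) := by
  have h : ∃ s, RealizesOrder (R t) H s := ⟨s, hs⟩
  obtain ⟨hinj, hrange, horder⟩ := h.choose_spec
  exact (dif_pos h).trans
    (hH t _ _ hinj hrange hs.2.1 fun a b => (horder a b).symm.trans (hs.2.2 a b))

end InducedStrategy

/-- Let `κ` be an uncountable cardinal (formalized as an uncountable well-ordered set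
`O`) carrying a normal `κ`-complete nonprincipal ultrafilter `U`. If player II has a
winning strategy in the auxiliary game associated to an order representation of
`A ⊆ ℕ^ℕ`, then player II has a winning strategy in the Gale–Stewart game on ℕ with
payoff `A`. -/
theorem winningII_of_auxWinningII {O : Type u} [LinearOrder O] [WellFoundedLT O]
    [Uncountable O] (U : Ultrafilter O)
    (hU_complete : KappaComplete U) (hU_nonpr : Nonprincipal U) (hU_normal : NormalUF U)
    (A : Set (ℕ → ℕ)) (R : List ℕ → ℕ → ℕ → Prop) (hR : OrderRep A R)
    (τ : List ℕ × List O → ℕ) (hτ : AuxWinningII A R τ) :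
    ∃ τ' : List ℕ → ℕ, WinningII A τ' := by
  obtain ⟨H, hHU, hH⟩ := exists_mem_forall_isOrderHomogeneous hU_complete hU_nonpr hU_normal
    (n := fun t : List ℕ => t.length / 2 + 1) fun t s => τ (t, List.ofFn s)
  refine ⟨inducedStrategy R H τ, fun x hcons hxA => ?_⟩
  have := hR.isWellOrder_unionOrder hxA
  obtain ⟨e⟩ := exists_relEmbedding_of_not_countable (unionOrder R x)
    (hU_complete.not_countable_of_mem hU_nonpr hHU)
  set ξ : ℕ → O := fun i => e i
  have hξ : ∀ {m i j}, i ≤ m → j ≤ m → (R (hist x m) i j ↔ ξ i < ξ j) := fun hi hj =>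
    (hR.rel_hist_iff_unionOrder hi hj).trans e.map_rel_iff.symm
  refine hτ x ξ (fun i => ?_) ⟨hxA, fun k i j hi hj => by refine hξ ?_ ?_ <;> omega⟩
  have hcons_i := hcons i
  set t := hist x (2 * i + 1)
  have hlen : t.length / 2 = i := by rw [hist_length]; omega
  have hreal : RealizesOrder (R t) H fun k : Fin (t.length / 2 + 1) => ξ k :=
    ⟨fun a b hab => Fin.ext (e.injective (Subtype.ext hab)), by rintro _ ⟨k, rfl⟩; exact (e k).2,
      fun a b => by refine hξ ?_ ?_ <;> omega⟩
  rw [hcons_i, inducedStrategy_eq hH hreal]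
  exact congrArg (fun n => τ (t, hist ξ (n + 1))) hlen
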